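/- arXiv:1607.06890 — 2 statements merged into one kernel-verified Lean document; each statement's English description precedes it below -/
import Mathlib

section
/- Let f: ℝ^N → ℝ be convex with M-Lipschitz gradient (M > 0), bounded below, and let (q_k) be a sequence with q_{k+1} = q_k + s_k where each s_k satisfies s_k·(s_k + ε ∇f(q_k)) ≤ 0 for step-size 0 < ε < 2/M. Then Σ_{k=0}^∞ ‖s_k‖² < ∞, and consequently s_k → 0. -/
/-!
Along the line `t ↦ x + t • v` the `M`-Lipschitz gradient gives the descent inequality
`f (x + v) ≤ f x + ⟪∇f x, v⟫ + M/2 ‖v‖²`. The step condition `⟪s, s + ε ∇f x⟫ ≤ 0` says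
`⟪∇f x, s⟫ ≤ -‖s‖²/ε`, so each step lowers `f` by at least `(1/ε - M/2) ‖s‖²`, a positive multiple
of `‖s‖²` because `ε < 2/M`. Since `f` is bounded below, these decreases are summable.
-/

open RealInnerProductSpace Filter

section Descent

variable {E : Type*} [NormedAddCommGroup E] [InnerProductSpace ℝ E] {f : E → ℝ} {g : E → E} {M : ℝ}

theorem inner_sub_le_of_lipschitz (hLip : ∀ x y, ‖g x - g y‖ ≤ M * ‖x - y‖) (x v : E) {t : ℝ}
    (ht : 0 ≤ t) : ⟪g (x + t • v) - g x, v⟫ ≤ M * t * ‖v‖ ^ 2 :=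
  calc ⟪g (x + t • v) - g x, v⟫ ≤ ‖g (x + t • v) - g x‖ * ‖v‖ := real_inner_le_norm _ _
    _ ≤ M * ‖x + t • v - x‖ * ‖v‖ := by gcongr; exact hLip _ _
    _ = M * t * ‖v‖ ^ 2 := by
      rw [add_sub_cancel_left, norm_smul, Real.norm_of_nonneg ht]; ring

variable [CompleteSpace E]

theorem hasDerivAt_comp_add_smul (hgrad : ∀ x, HasGradientAt f (g x) x) (x v : E) (t : ℝ) :
    HasDerivAt (fun t : ℝ => f (x + t • v)) ⟪g (x + t • v), v⟫ t := by
  have hline : HasDerivAt (fun t : ℝ => x + t • v) v t := by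
    simpa using ((hasDerivAt_id t).smul_const v).const_add x
  have h := (hgrad (x + t • v)).hasFDerivAt.comp_hasDerivAt t hline
  simp only [InnerProductSpace.toDual_apply_apply] at h
  exact h

theorem le_add_inner_add_sq_of_lipschitz_gradient (hgrad : ∀ x, HasGradientAt f (g x) x)
    (hLip : ∀ x y, ‖g x - g y‖ ≤ M * ‖x - y‖) (x v : E) :
    f (x + v) ≤ f x + ⟪g x, v⟫ + M / 2 * ‖v‖ ^ 2 := by
  set φ : ℝ → ℝ := fun t => f (x + t • v) - t * ⟪g x, v⟫ - M / 2 * t ^ 2 * ‖v‖ ^ 2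
  have hφ : ∀ t, HasDerivAt φ (⟪g (x + t • v) - g x, v⟫ - M * t * ‖v‖ ^ 2) t := by
    intro t
    have h := ((hasDerivAt_comp_add_smul hgrad x v t).sub
      ((hasDerivAt_id t).mul_const ⟪g x, v⟫)).sub
      (((hasDerivAt_pow 2 t).const_mul (M / 2)).mul_const (‖v‖ ^ 2))
    refine h.congr_deriv ?_
    rw [inner_sub_left]; simp only [Nat.cast_ofNat]; ring
  have hanti : AntitoneOn φ (Set.Icc 0 1) :=
    antitoneOn_of_hasDerivWithinAt_nonpos (convex_Icc 0 1)
      (fun t _ => (hφ t).continuousAt.continuousWithinAt) (fun t _ => (hφ t).hasDerivWithinAt)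
      (fun t ht => sub_nonpos.2 <| inner_sub_le_of_lipschitz hLip x v
        (interior_Icc (a := (0 : ℝ)) ▸ ht).1.le)
  have h01 := hanti (Set.left_mem_Icc.2 zero_le_one) (Set.right_mem_Icc.2 zero_le_one) zero_le_one
  simp only [φ, zero_smul, add_zero, one_smul, one_pow] at h01
  linarith

theorem le_sub_mul_sq_of_inner_add_smul_nonpos (hgrad : ∀ x, HasGradientAt f (g x) x)
    (hLip : ∀ x y, ‖g x - g y‖ ≤ M * ‖x - y‖) {ε : ℝ} (hε : 0 < ε) {x s : E}
    (hs : ⟪s, s + ε • g x⟫ ≤ 0) : f (x + s) ≤ f x - (ε⁻¹ - M / 2) * ‖s‖ ^ 2 := by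
  rw [inner_add_right, real_inner_smul_right, real_inner_self_eq_norm_sq, real_inner_comm] at hs
  have hdec : ε⁻¹ * (‖s‖ ^ 2 + ε * ⟪g x, s⟫) ≤ 0 :=
    mul_nonpos_of_nonneg_of_nonpos (inv_nonneg.2 hε.le) hs
  rw [mul_add, inv_mul_cancel_left₀ hε.ne'] at hdec
  linarith [le_add_inner_add_sq_of_lipschitz_gradient hgrad hLip x s]

end Descent

theorem summable_of_le_sub_mul_of_bddBelow {a b : ℕ → ℝ} {c m : ℝ} (hc : 0 < c)
    (hb : ∀ k, 0 ≤ b k) (ha : ∀ k, a (k + 1) ≤ a k - c * b k) (hm : ∀ k, m ≤ a k) :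
    Summable b := by
  have htel : ∀ n, a n + c * ∑ k ∈ Finset.range n, b k ≤ a 0 := by
    intro n
    induction n with
    | zero => simp
    | succ n ih => rw [Finset.sum_range_succ, mul_add]; linarith [ha n]
  exact summable_of_sum_range_le (c := (a 0 - m) / c) hb fun n =>
    (le_div_iff₀' hc).2 (by linarith [htel n, hm n])

theorem tendsto_zero_of_summable_norm_sq {E : Type*} [SeminormedAddCommGroup E] {s : ℕ → E}
    (hs : Summable fun k => ‖s k‖ ^ 2) : Tendsto s atTop (nhds 0) := by
  rw [tendsto_zero_iff_norm_tendsto_zero]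
  simpa [Real.sqrt_sq (norm_nonneg _)] using hs.tendsto_atTop_zero.sqrt

theorem stmt4_general {N : ℕ} (f : EuclideanSpace ℝ (Fin N) → ℝ)
    (g : EuclideanSpace ℝ (Fin N) → EuclideanSpace ℝ (Fin N))
    (hgrad : ∀ x, HasGradientAt f (g x) x)
    (Mc : ℝ)
    (hLip : ∀ x y, ‖g x - g y‖ ≤ Mc * ‖x - y‖)
    (hbdd : ∃ m, ∀ x, m ≤ f x)
    (ε : ℝ) (hε1 : 0 < ε) (hε2 : ε < 2 / Mc)
    (q s : ℕ → EuclideanSpace ℝ (Fin N))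
    (hrec : ∀ k, q (k+1) = q k + s k)
    (hs : ∀ k, ⟪s k, s k + ε • g (q k)⟫ ≤ 0) :
    Summable (fun k => ‖s k‖^2) ∧ Tendsto s atTop (nhds 0) := by
  obtain ⟨m, hm⟩ := hbdd
  have hMc : 0 < Mc := (div_pos_iff_of_pos_left two_pos).1 (hε1.trans hε2)
  have hc : 0 < ε⁻¹ - Mc / 2 := by
    have : ε * Mc < 2 := (lt_div_iff₀ hMc).1 hε2
    have : Mc / 2 < ε⁻¹ := by rw [lt_inv_comm₀ (by positivity) hε1]; field_simp; linarith
    linarith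
  have hsum : Summable fun k => ‖s k‖ ^ 2 :=
    summable_of_le_sub_mul_of_bddBelow hc (fun k => by positivity)
      (fun k => hrec k ▸ le_sub_mul_sq_of_inner_add_smul_nonpos hgrad hLip hε1 (hs k))
      (fun k => hm (q k))
  exact ⟨hsum, tendsto_zero_of_summable_norm_sq hsum⟩

/-- For convex `f` with `M`-Lipschitz gradient, bounded below, and a sequence
`q_{k+1} = q_k + s_k` where `⟪s_k, s_k + ε ∇f(q_k)⟫ ≤ 0` with `0 < ε < 2/M`, the squared
increments are summable and `s_k → 0`. -/
theorem stmt4 {N : ℕ} (f : EuclideanSpace ℝ (Fin N) → ℝ)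
    (g : EuclideanSpace ℝ (Fin N) → EuclideanSpace ℝ (Fin N))
    (hgrad : ∀ x, HasGradientAt f (g x) x)
    (hconv : ConvexOn ℝ Set.univ f)
    (Mc : ℝ) (hMc : 0 < Mc)
    (hLip : ∀ x y, ‖g x - g y‖ ≤ Mc * ‖x - y‖)
    (hbdd : ∃ m, ∀ x, m ≤ f x)
    (ε : ℝ) (hε1 : 0 < ε) (hε2 : ε < 2 / Mc)
    (q s : ℕ → EuclideanSpace ℝ (Fin N))
    (hrec : ∀ k, q (k+1) = q k + s k)
    (hs : ∀ k, ⟪s k, s k + ε • g (q k)⟫ ≤ 0) :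
    Summable (fun k => ‖s k‖^2) ∧ Tendsto s atTop (nhds 0) :=
  stmt4_general f g hgrad Mc hLip hbdd ε hε1 hε2 q s hrec hs
end

section
/- Under the stationary AR(1) model v̄_{k+1} = α v̄_k + η_{k+1} + c̄ with |α| < 1, noise covariance σ²I, and stationary initialization, the expected weighted squared norm of the successive difference satisfies E‖v̄_{k+1} - v̄_k‖_D² = 2σ² Tr(D)/(1+α) for every k, where ‖v‖_D² = v^T D v and D is a positive diagonal matrix. In particular this quantity is bounded uniformly in k. -/
/-!
Writing `m = c̄/(1-α)` for the stationary mean, the recursion gives the increment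
`v̄_{k+1} - v̄_k = (α - 1)(v̄_k - m) + η_{k+1}`. The two summands are independent and the first is
centred, so the cross term has zero expectation and each coordinate contributes
`(1-α)² σ²/(1-α²) + σ² = 2σ²/(1+α)`.
-/

open MeasureTheory ProbabilityTheory

section IndepSquare

variable {Ω : Type*} [MeasurableSpace Ω] {μ : Measure Ω} {X Y : Ω → ℝ}

lemma ProbabilityTheory.IndepFun.integrable_sq_add (hXY : IndepFun X Y μ)
    (hX : Integrable X μ) (hY : Integrable Y μ) (hX2 : Integrable (fun ω => X ω ^ 2) μ)
    (hY2 : Integrable (fun ω => Y ω ^ 2) μ) (a : ℝ) :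
    Integrable (fun ω => (a * X ω + Y ω) ^ 2) μ := by
  have hXY_int : Integrable (fun ω => X ω * Y ω) μ := hXY.integrable_mul hX hY
  have h := ((hX2.const_mul (a ^ 2)).fun_add (hXY_int.const_mul (2 * a))).fun_add hY2
  exact h.congr (.of_forall fun ω => by ring)

lemma ProbabilityTheory.IndepFun.integral_sq_add (hXY : IndepFun X Y μ)
    (hX : Integrable X μ) (hY : Integrable Y μ) (hX2 : Integrable (fun ω => X ω ^ 2) μ)
    (hY2 : Integrable (fun ω => Y ω ^ 2) μ) (hX0 : ∫ ω, X ω ∂μ = 0) (a : ℝ) :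
    ∫ ω, (a * X ω + Y ω) ^ 2 ∂μ = a ^ 2 * ∫ ω, X ω ^ 2 ∂μ + ∫ ω, Y ω ^ 2 ∂μ := by
  have hXY_int : Integrable (fun ω => X ω * Y ω) μ := hXY.integrable_mul hX hY
  have hcross : ∫ ω, X ω * Y ω ∂μ = 0 := by
    rw [hXY.integral_fun_mul_eq_mul_integral hX.1 hY.1, hX0, zero_mul]
  calc ∫ ω, (a * X ω + Y ω) ^ 2 ∂μ
      = ∫ ω, (a ^ 2 * X ω ^ 2 + 2 * a * (X ω * Y ω)) + Y ω ^ 2 ∂μ := by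
        congr 1; funext ω; ring
    _ = a ^ 2 * ∫ ω, X ω ^ 2 ∂μ + ∫ ω, Y ω ^ 2 ∂μ := by
        rw [integral_add ((hX2.const_mul _).fun_add (hXY_int.const_mul _)) hY2,
          integral_add (hX2.const_mul _) (hXY_int.const_mul _), integral_const_mul,
          integral_const_mul, hcross, mul_zero, add_zero]

end IndepSquare

lemma MeasureTheory.Integrable.sq_sub_const {Ω : Type*} [MeasurableSpace Ω] {μ : Measure Ω}
    [IsFiniteMeasure μ] {X : Ω → ℝ} (hX : Integrable X μ)
    (hXX : Integrable (fun ω => X ω * X ω) μ) (m : ℝ) :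
    Integrable (fun ω => (X ω - m) ^ 2) μ :=
  ((hXX.sub (hX.const_mul (2 * m))).fun_add (integrable_const (m ^ 2))).congr
    (.of_forall fun ω => by simp only [Pi.sub_apply]; ring)

lemma MeasureTheory.integral_finset_sum_mul_eq_of_integral_eq {Ω ι : Type*}
    [MeasurableSpace Ω] {μ : Measure Ω} (s : Finset ι) (w : ι → ℝ) {f : ι → Ω → ℝ} {r : ℝ}
    (hf : ∀ i ∈ s, Integrable (f i) μ) (hr : ∀ i ∈ s, ∫ ω, f i ω ∂μ = r) :
    ∫ ω, ∑ i ∈ s, w i * f i ω ∂μ = (∑ i ∈ s, w i) * r := by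
  rw [integral_finsetSum s fun i hi => (hf i hi).const_mul (w i), Finset.sum_mul]
  exact Finset.sum_congr rfl fun i hi => by rw [integral_const_mul, hr i hi]

lemma ar1_increment_eq {α x e c : ℝ} (hα : α ≠ 1) :
    α * x + e + c - x = (α - 1) * (x - c / (1 - α)) + e := by
  have : 1 - α ≠ 0 := sub_ne_zero.mpr hα.symm
  field_simp
  ring

lemma ar1_increment_variance {α s : ℝ} (hα : |α| < 1) :
    (α - 1) ^ 2 * (s / (1 - α ^ 2)) + s = 2 * s / (1 + α) := by
  obtain ⟨hα₁, hα₂⟩ := abs_lt.mp hα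
  have h₁ : 1 - α ≠ 0 := by linarith
  have h₂ : 1 + α ≠ 0 := by linarith
  rw [show 1 - α ^ 2 = (1 - α) * (1 + α) by ring]
  field_simp
  ring

section AR1Step

variable {Ω : Type*} [MeasurableSpace Ω] {μ : Measure Ω} {X E : Ω → ℝ} {α c s : ℝ}

lemma integrable_sq_ar1_increment [IsFiniteMeasure μ] (hα : α ≠ 1) (hXE : IndepFun X E μ)
    (hX : Integrable X μ) (hXX : Integrable (fun ω => X ω * X ω) μ) (hE : Integrable E μ)
    (hEE : Integrable (fun ω => E ω * E ω) μ) :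
    Integrable (fun ω => (α * X ω + E ω + c - X ω) ^ 2) μ := by
  simp_rw [ar1_increment_eq hα]
  exact (hXE.comp (measurable_id.sub_const _) measurable_id).integrable_sq_add
    (hX.sub (integrable_const _)) hE (hX.sq_sub_const hXX _) (by simpa [sq] using hEE) _

lemma integral_sq_ar1_increment [IsProbabilityMeasure μ] (hα : |α| < 1) (hXE : IndepFun X E μ)
    (hX : Integrable X μ) (hXX : Integrable (fun ω => X ω * X ω) μ) (hE : Integrable E μ)
    (hEE : Integrable (fun ω => E ω * E ω) μ) (hmean : ∫ ω, X ω ∂μ = c / (1 - α))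
    (hvar : ∫ ω, (X ω - c / (1 - α)) ^ 2 ∂μ = s / (1 - α ^ 2)) (hEvar : ∫ ω, E ω ^ 2 ∂μ = s) :
    ∫ ω, (α * X ω + E ω + c - X ω) ^ 2 ∂μ = 2 * s / (1 + α) := by
  have hα₁ : α ≠ 1 := (abs_lt.mp hα).2.ne
  have hcentred : ∫ ω, (X ω - c / (1 - α)) ∂μ = 0 := by
    rw [integral_sub hX (integrable_const _), hmean, integral_const]
    simp
  have hind : IndepFun (fun ω => X ω - c / (1 - α)) E μ :=
    hXE.comp (measurable_id.sub_const _) measurable_id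
  simp_rw [ar1_increment_eq hα₁]
  rw [hind.integral_sq_add (hX.sub (integrable_const _)) hE (hX.sq_sub_const hXX _)
    (by simpa [sq] using hEE) hcentred, hvar, hEvar, ar1_increment_variance hα]

end AR1Step

theorem stmt6_general {N : ℕ} {Ω : Type*} [MeasureSpace Ω] [IsProbabilityMeasure (ℙ : Measure Ω)]
    (α σ : ℝ) (hα : |α| < 1) (c : Fin N → ℝ)
    (d : Fin N → ℝ)
    (v η : ℕ → Ω → Fin N → ℝ)
    (hrec : ∀ k ω i, v (k+1) ω i = α * v k ω i + η (k+1) ω i + c i)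
    (hindep : ∀ k, IndepFun (v k) (η (k+1)) ℙ)
    (hηint : ∀ k i, Integrable (fun ω => η (k+1) ω i))
    (hηint2 : ∀ k i j, Integrable (fun ω => η (k+1) ω i * η (k+1) ω j))
    (hηcov : ∀ k i j, ∫ ω, η (k+1) ω i * η (k+1) ω j = if i = j then σ^2 else 0)
    (hvint : ∀ k i, Integrable (fun ω => v k ω i))
    (hvint2 : ∀ k i j, Integrable (fun ω => v k ω i * v k ω j))
    -- stationarity: every v̄_k has mean c̄/(1-α) and covariance σ²/(1-α²) I
    (hmean : ∀ k i, ∫ ω, v k ω i = c i / (1 - α))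
    (hcov : ∀ k i j, ∫ ω, (v k ω i - c i / (1 - α)) * (v k ω j - c j / (1 - α)) =
      if i = j then σ^2 / (1 - α^2) else 0) :
    (∀ k, ∫ ω, ∑ i, d i * (v (k+1) ω i - v k ω i)^2 = 2 * σ^2 * (∑ i, d i) / (1 + α)) ∧
    ∃ B₁ : ℝ, ∀ k, ∫ ω, ∑ i, d i * (v (k+1) ω i - v k ω i)^2 ≤ B₁ := by
  have key : ∀ k, ∫ ω, ∑ i, d i * (v (k+1) ω i - v k ω i)^2
      = 2 * σ^2 * (∑ i, d i) / (1 + α) := by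
    intro k
    have hind : ∀ i, IndepFun (fun ω => v k ω i) (fun ω => η (k+1) ω i) ℙ :=
      fun i => (hindep k).comp (measurable_pi_apply i) (measurable_pi_apply i)
    simp_rw [hrec]
    rw [integral_finset_sum_mul_eq_of_integral_eq _ _
      (fun i _ => integrable_sq_ar1_increment (abs_lt.mp hα).2.ne (hind i) (hvint k i)
        (hvint2 k i i) (hηint k i) (hηint2 k i i))
      (fun i _ => integral_sq_ar1_increment hα (hind i) (hvint k i) (hvint2 k i i) (hηint k i)
        (hηint2 k i i) (hmean k i) (by simpa [sq] using hcov k i i)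
        (by simpa [sq] using hηcov k i i))]
    ring
  exact ⟨key, _, fun k => (key k).le⟩

/-- Proposition 2: Under the stationary AR(1) model
`v̄_{k+1} = α v̄_k + η_{k+1} + c̄` with `|α| < 1`, noise covariance `σ² I` and stationary
initialization, the expected weighted squared successive difference satisfies
`E‖v̄_{k+1} - v̄_k‖²_D = 2σ² Tr(D)/(1+α)` for every `k`, where `D` is a positive diagonal
matrix; in particular it is uniformly bounded. -/
theorem stmt6 {N : ℕ} {Ω : Type*} [MeasureSpace Ω] [IsProbabilityMeasure (ℙ : Measure Ω)]
    (α σ : ℝ) (hα : |α| < 1) (c : Fin N → ℝ)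
    (d : Fin N → ℝ) (hd : ∀ i, 0 < d i)
    (v η : ℕ → Ω → Fin N → ℝ)
    (hmv : ∀ k, Measurable (v k)) (hmη : ∀ k, Measurable (η k))
    (hrec : ∀ k ω i, v (k+1) ω i = α * v k ω i + η (k+1) ω i + c i)
    (hindep : ∀ k, IndepFun (v k) (η (k+1)) ℙ)
    (hηint : ∀ k i, Integrable (fun ω => η (k+1) ω i))
    (hηint2 : ∀ k i j, Integrable (fun ω => η (k+1) ω i * η (k+1) ω j))
    (hηmean : ∀ k i, ∫ ω, η (k+1) ω i = 0)
    (hηcov : ∀ k i j, ∫ ω, η (k+1) ω i * η (k+1) ω j = if i = j then σ^2 else 0)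
    (hvint : ∀ k i, Integrable (fun ω => v k ω i))
    (hvint2 : ∀ k i j, Integrable (fun ω => v k ω i * v k ω j))
    -- stationarity: every v̄_k has mean c̄/(1-α) and covariance σ²/(1-α²) I
    (hmean : ∀ k i, ∫ ω, v k ω i = c i / (1 - α))
    (hcov : ∀ k i j, ∫ ω, (v k ω i - c i / (1 - α)) * (v k ω j - c j / (1 - α)) =
      if i = j then σ^2 / (1 - α^2) else 0) :
    (∀ k, ∫ ω, ∑ i, d i * (v (k+1) ω i - v k ω i)^2 = 2 * σ^2 * (∑ i, d i) / (1 + α)) ∧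
    ∃ B₁ : ℝ, ∀ k, ∫ ω, ∑ i, d i * (v (k+1) ω i - v k ω i)^2 ≤ B₁ :=
  stmt6_general α σ hα c d v η hrec hindep hηint hηint2 hηcov hvint hvint2 hmean hcov
end
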